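/- arXiv:2002.00447 — 3 statements merged into one kernel-verified Lean document; each statement's English description precedes it below -/
import Mathlib

section
/- Let N be a positive integer, let q ∈ ℂ with 0 < |q| < 1, let t, a ∈ ℂ with |t| < 1 and a·q^k ≠ 1 for every integer k ≥ 0, and let (g_n)_{n≥0} be a sequence of complex numbers with ∑_{n=0}^∞ |g_n| < ∞; write G(z) = ∑_{m=0}^∞ g_m z^m. Then ∑_{n=0}^∞ g_n · [ ((aq^N;q)_n (t;q)_n) / ((tq^N;q)_n (a;q)_n) − (t;q)_N/(a;q)_N ] = ((t;q)_N/(a;q)_N) · ∑_{n=1}^∞ ( ∑_{k=0}^{n} [n k]_q · a^k q^{Nk} t^{n−k} · (q^{−N};q)_k · (q^{N};q)_{n−k} ) · G(q^n) / (q;q)_n. -/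
/-! Since `(x;q)_{N+n} = (x;q)_N (xq^N;q)_n = (x;q)_n (xq^n;q)_N`, the bracket equals
`C ((aq^n;q)_N / (tq^n;q)_N - 1)` with `C = (t;q)_N / (a;q)_N`. Multiplying the finite
`q`-binomial expansion of `(az;q)_N` by the `q`-binomial series of `1 / (tz;q)_N` writes
`(az;q)_N / (tz;q)_N = ∑_M c_M z^M / (q;q)_M`, where `c_M` is the inner sum over `k` and `c_0 = 1`.
At `z = q^n` the double series converges absolutely because `∑ |g_n| < ∞` and `|q^n| ≤ 1`,
so the summations may be swapped, and summing over `n` first produces `G(q^M)`. -/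

/-- Finite q-Pochhammer symbol `(x;q)_n = ∏_{k=0}^{n-1} (1 - x q^k)`. -/
noncomputable def qPoch (x q : ℂ) (n : ℕ) : ℂ := ∏ k ∈ Finset.range n, (1 - x * q ^ k)

/-- Infinite q-Pochhammer symbol `(x;q)_∞ = ∏_{k=0}^{∞} (1 - x q^k)`. -/
noncomputable def qPochInf (x q : ℂ) : ℂ := ∏' k : ℕ, (1 - x * q ^ k)

/-- Gaussian binomial coefficient `[n k]_q`, equal to `0` for `k > n`. -/
noncomputable def gbinom (q : ℂ) (n k : ℕ) : ℂ :=
  if k ≤ n then qPoch q q n / (qPoch q q k * qPoch q q (n - k)) else 0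

open Finset Filter Topology

lemma qPoch_zero (x q : ℂ) : qPoch x q 0 = 1 := prod_range_zero _

lemma qPoch_succ (x q : ℂ) (n : ℕ) : qPoch x q (n + 1) = qPoch x q n * (1 - x * q ^ n) :=
  prod_range_succ _ _

lemma qPoch_succ' (x q : ℂ) (n : ℕ) : qPoch x q (n + 1) = (1 - x) * qPoch (x * q) q n := by
  simp only [qPoch, prod_range_succ', pow_zero, mul_one, pow_succ', ← mul_assoc, mul_right_comm x q]
  ring

lemma qPoch_add (x q : ℂ) (m n : ℕ) :
    qPoch x q (m + n) = qPoch x q m * qPoch (x * q ^ m) q n := by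
  simp only [qPoch, prod_range_add, pow_add, mul_assoc]

lemma qPoch_ne_zero {x q : ℂ} (h : ∀ k, x * q ^ k ≠ 1) (n : ℕ) : qPoch x q n ≠ 0 :=
  prod_ne_zero_iff.mpr fun k _ => sub_ne_zero.mpr (h k).symm

lemma norm_mul_pow_lt_one {x q : ℂ} (hx : ‖x‖ < 1) (hq : ‖q‖ ≤ 1) (k : ℕ) : ‖x * q ^ k‖ < 1 := by
  rw [norm_mul, norm_pow]
  exact (mul_le_of_le_one_right (norm_nonneg x) (pow_le_one₀ (norm_nonneg q) hq)).trans_lt hx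

lemma mul_pow_ne_one_of_norm_lt_one {x q : ℂ} (hx : ‖x‖ < 1) (hq : ‖q‖ ≤ 1) (k : ℕ) :
    x * q ^ k ≠ 1 :=
  fun h => by simpa [h] using norm_mul_pow_lt_one hx hq k

lemma qPoch_ne_zero_of_norm_lt_one {x q : ℂ} (hx : ‖x‖ < 1) (hq : ‖q‖ ≤ 1) (n : ℕ) :
    qPoch x q n ≠ 0 :=
  qPoch_ne_zero (mul_pow_ne_one_of_norm_lt_one hx hq) n

lemma qPoch_self_ne_zero {q : ℂ} (hq : ∀ k, q ^ (k + 1) ≠ 1) (n : ℕ) : qPoch q q n ≠ 0 :=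
  qPoch_ne_zero (fun k => pow_succ' q k ▸ hq k) n

lemma pow_succ_ne_one_of_norm_lt_one {q : ℂ} (hq : ‖q‖ < 1) (k : ℕ) : q ^ (k + 1) ≠ 1 :=
  pow_succ' q k ▸ mul_pow_ne_one_of_norm_lt_one hq hq.le k

lemma qPoch_self_succ (q : ℂ) (n : ℕ) : qPoch q q (n + 1) = qPoch q q n * (1 - q ^ (n + 1)) := by
  rw [qPoch_succ, pow_succ']

/-- `(q^{-N};q)_k q^{Nk}`, written without negative powers. -/
noncomputable def qPochNeg (q : ℂ) (N k : ℕ) : ℂ := ∏ j ∈ range k, (q ^ N - q ^ j)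

lemma qPochNeg_zero (q : ℂ) (N : ℕ) : qPochNeg q N 0 = 1 := prod_range_zero _

lemma qPochNeg_eq_zero {q : ℂ} {N k : ℕ} (h : N < k) : qPochNeg q N k = 0 :=
  prod_eq_zero (mem_range.mpr h) (sub_self _)

lemma qPochNeg_succ_succ (q : ℂ) (N k : ℕ) :
    qPochNeg q (N + 1) (k + 1) =
      qPochNeg q N (k + 1) - q ^ N * (1 - q ^ (k + 1)) * qPochNeg q N k := by
  have shift : qPochNeg q (N + 1) (k + 1) = (q ^ (N + 1) - 1) * q ^ k * qPochNeg q N k := by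
    simp only [qPochNeg, prod_range_succ', pow_zero, pow_succ', ← mul_sub, prod_mul_distrib,
      prod_const, card_range]
    ring
  rw [shift]
  simp only [qPochNeg, prod_range_succ]
  ring

lemma qPoch_zpow_neg_mul_pow {q : ℂ} (hq : q ≠ 0) (N k : ℕ) :
    qPoch (q ^ (-(N : ℤ))) q k * q ^ (N * k) = qPochNeg q N k := by
  rw [qPoch, qPochNeg, pow_mul, ← card_range k, ← prod_const, card_range, ← prod_mul_distrib]
  refine prod_congr rfl fun j _ => ?_
  rw [sub_mul, one_mul, mul_right_comm, zpow_neg, zpow_natCast, inv_mul_cancel₀ (pow_ne_zero N hq),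
    one_mul]

/-- The finite `q`-binomial theorem. -/
theorem hasSum_qPochNeg {q : ℂ} (hq : ∀ k, q ^ (k + 1) ≠ 1) (x : ℂ) (N : ℕ) :
    HasSum (fun k => qPochNeg q N k * x ^ k / qPoch q q k) (qPoch x q N) := by
  induction N with
  | zero =>
    convert hasSum_single (f := fun k => qPochNeg q 0 k * x ^ k / qPoch q q k) 0 fun k hk => by
      rw [qPochNeg_eq_zero (Nat.pos_of_ne_zero hk), zero_mul, zero_div]
    simp [qPochNeg_zero, qPoch_zero]
  | succ N ih =>
    have step : ∀ k, qPochNeg q (N + 1) (k + 1) * x ^ (k + 1) / qPoch q q (k + 1) =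
        qPochNeg q N (k + 1) * x ^ (k + 1) / qPoch q q (k + 1)
          - q ^ N * x * (qPochNeg q N k * x ^ k / qPoch q q k) := fun k => by
      have := qPoch_self_ne_zero hq k
      have := sub_ne_zero.mpr (hq k).symm
      rw [qPochNeg_succ_succ, qPoch_self_succ]
      field_simp
      ring
    rw [← hasSum_nat_add_iff' 1]
    convert ((hasSum_nat_add_iff' 1).mpr ih).sub (ih.mul_left (q ^ N * x)) using 1
    · exact funext step
    · simp only [qPoch_succ, sum_range_one, qPochNeg_zero, pow_zero, mul_one, qPoch_zero, div_one]
      ring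

lemma summable_norm_qPochNeg_mul_pow_div (q x : ℂ) (N : ℕ) :
    Summable fun k => ‖qPochNeg q N k * x ^ k / qPoch q q k‖ :=
  summable_of_ne_finset_zero (s := range (N + 1)) fun k hk => by
    rw [qPochNeg_eq_zero (by simpa using hk), zero_mul, zero_div, norm_zero]

lemma summable_norm_qPoch_pow_mul_pow_div {q w : ℂ} (hq : ‖q‖ < 1) (hw : ‖w‖ < 1) (N : ℕ) :
    Summable fun j => ‖qPoch (q ^ N) q j * w ^ j / qPoch q q j‖ := by
  set u := fun j => qPoch (q ^ N) q j * w ^ j / qPoch q q j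
  set ρ : ℕ → ℂ := fun j => (1 - q ^ N * q ^ j) * w / (1 - q * q ^ j)
  have hu : ∀ j, u (j + 1) = ρ j * u j := fun j => by
    have := qPoch_self_ne_zero (pow_succ_ne_one_of_norm_lt_one hq) j
    have := sub_ne_zero.mpr (pow_succ' q j ▸ pow_succ_ne_one_of_norm_lt_one hq j).symm
    simp only [u, ρ, qPoch_succ, pow_succ]
    field_simp
  have hρ : Tendsto ρ atTop (𝓝 w) := by
    have hpow := tendsto_pow_atTop_nhds_zero_of_norm_lt_one hq
    have := ((tendsto_const_nhds (x := (1 : ℂ)).sub (hpow.const_mul (q ^ N))).mul_const w).div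
      (tendsto_const_nhds (x := (1 : ℂ)).sub (hpow.const_mul q)) (by simp)
    simpa [ρ, Pi.div_def] using this
  obtain ⟨r, hwr, hr1⟩ := exists_between hw
  refine summable_of_ratio_norm_eventually_le hr1 ?_
  filter_upwards [hρ.norm.eventually (gt_mem_nhds hwr)] with j hj
  change ‖‖u (j + 1)‖‖ ≤ r * ‖‖u j‖‖
  rw [norm_norm, norm_norm, hu, norm_mul]
  exact mul_le_mul_of_nonneg_right hj.le (norm_nonneg _)

/-- The `q`-binomial theorem for `(q^N;q)_∞ / (w;q)_∞ = 1 / (w;q)_N`. -/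
theorem hasSum_qPoch_pow_mul_pow_div {q w : ℂ} (hq : ‖q‖ < 1) (hw : ‖w‖ < 1) (N : ℕ) :
    HasSum (fun j => qPoch (q ^ N) q j * w ^ j / qPoch q q j) (qPoch w q N)⁻¹ := by
  induction N with
  | zero =>
    convert hasSum_single (f := fun j => qPoch (q ^ 0) q j * w ^ j / qPoch q q j) 0 fun j hj => by
      obtain ⟨i, rfl⟩ := Nat.exists_eq_succ_of_ne_zero hj
      rw [qPoch_succ', pow_zero, sub_self, zero_mul, zero_mul, zero_div]
    simp [qPoch_zero]
  | succ N ih =>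
    obtain ⟨T, hT⟩ := (summable_norm_qPoch_pow_mul_pow_div hq hw (N + 1)).of_norm
    have step : ∀ j, qPoch (q ^ (N + 1)) q (j + 1) * w ^ (j + 1) / qPoch q q (j + 1) =
        qPoch (q ^ N) q (j + 1) * w ^ (j + 1) / qPoch q q (j + 1)
          + q ^ N * w * (qPoch (q ^ (N + 1)) q j * w ^ j / qPoch q q j) := fun j => by
      have := qPoch_self_ne_zero (pow_succ_ne_one_of_norm_lt_one hq) j
      have := sub_ne_zero.mpr (pow_succ_ne_one_of_norm_lt_one hq j).symm
      rw [qPoch_succ (q ^ (N + 1)), qPoch_succ' (q ^ N), ← pow_succ, qPoch_self_succ]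
      field_simp
      ring
    have hshift := (hasSum_nat_add_iff' 1).mpr hT
    simp only [step] at hshift
    have hT_eq : T - 1 = ((qPoch w q N)⁻¹ - 1) + q ^ N * w * T := by
      simpa [qPoch_zero] using
        hshift.unique (((hasSum_nat_add_iff' 1).mpr ih).add (hT.mul_left (q ^ N * w)))
    have hT_mul : T * (1 - w * q ^ N) = (qPoch w q N)⁻¹ := by linear_combination hT_eq
    have hne := sub_ne_zero.mpr (mul_pow_ne_one_of_norm_lt_one hw hq.le N).symm
    rwa [qPoch_succ, mul_inv, ← hT_mul, mul_inv_cancel_right₀ hne]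

noncomputable def qPochRatioCoeff (q t a : ℂ) (N M : ℕ) : ℂ :=
  ∑ k ∈ range (M + 1),
    gbinom q M k * a ^ k * q ^ (N * k) * t ^ (M - k) *
      qPoch (q ^ (-(N : ℤ))) q k * qPoch (q ^ N) q (M - k)

lemma qPochRatioCoeff_zero (q t a : ℂ) (N : ℕ) : qPochRatioCoeff q t a N 0 = 1 := by
  simp [qPochRatioCoeff, gbinom, qPoch_zero]

lemma qPochRatioCoeff_mul_pow_div {q : ℂ} (hq0 : q ≠ 0) (hq : ∀ k, q ^ (k + 1) ≠ 1)
    (t a z : ℂ) (N M : ℕ) :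
    qPochRatioCoeff q t a N M * z ^ M / qPoch q q M =
      ∑ k ∈ range (M + 1), qPochNeg q N k * (a * z) ^ k / qPoch q q k *
        (qPoch (q ^ N) q (M - k) * (t * z) ^ (M - k) / qPoch q q (M - k)) := by
  rw [qPochRatioCoeff, sum_mul, sum_div]
  refine sum_congr rfl fun k hk => ?_
  have hkM : k ≤ M := Nat.lt_succ_iff.mp (mem_range.mp hk)
  have := qPoch_self_ne_zero hq k
  have := qPoch_self_ne_zero hq (M - k)
  have := qPoch_self_ne_zero hq M
  rw [gbinom, if_pos hkM, ← qPoch_zpow_neg_mul_pow hq0, mul_pow, mul_pow, ← pow_mul_pow_sub z hkM]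
  field_simp

theorem hasSum_qPochRatioCoeff {q : ℂ} (hq0 : q ≠ 0) (hq : ‖q‖ < 1) (t a : ℂ) {z : ℂ}
    (htz : ‖t * z‖ < 1) (N : ℕ) :
    HasSum (fun M => qPochRatioCoeff q t a N M * z ^ M / qPoch q q M)
      (qPoch (a * z) q N / qPoch (t * z) q N) := by
  have := hasSum_sum_range_mul_of_summable_norm (summable_norm_qPochNeg_mul_pow_div q (a * z) N)
    (summable_norm_qPoch_pow_mul_pow_div hq htz N)
  rw [(hasSum_qPochNeg (pow_succ_ne_one_of_norm_lt_one hq) (a * z) N).tsum_eq,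
    (hasSum_qPoch_pow_mul_pow_div hq htz N).tsum_eq] at this
  simp only [← qPochRatioCoeff_mul_pow_div hq0 (pow_succ_ne_one_of_norm_lt_one hq)] at this
  exact this

lemma summable_norm_qPochRatioCoeff {q : ℂ} (hq0 : q ≠ 0) (hq : ‖q‖ < 1) {t : ℂ}
    (ht : ‖t‖ < 1) (a : ℂ) (N : ℕ) :
    Summable fun M => ‖qPochRatioCoeff q t a N M / qPoch q q M‖ := by
  have := summable_norm_sum_mul_range_of_summable_norm
    (summable_norm_qPochNeg_mul_pow_div q (a * 1) N)
    (summable_norm_qPoch_pow_mul_pow_div hq (w := t * 1) (by simpa using ht) N)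
  simp only [← qPochRatioCoeff_mul_pow_div hq0 (pow_succ_ne_one_of_norm_lt_one hq) t a 1 N] at this
  simp only [one_pow, mul_one] at this
  exact this

lemma qPoch_shift_ratio {x y q : ℂ} {N m : ℕ} (hx : qPoch x q (N + m) ≠ 0)
    (hy : qPoch y q (N + m) ≠ 0) :
    qPoch (x * q ^ N) q m * qPoch y q m / (qPoch (y * q ^ N) q m * qPoch x q m) =
      qPoch y q N / qPoch x q N * (qPoch (x * q ^ m) q N / qPoch (y * q ^ m) q N) := by
  have hxN := qPoch_add x q N m
  have hxm := Nat.add_comm m N ▸ qPoch_add x q m N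
  have hyN := qPoch_add y q N m
  have hym := Nat.add_comm m N ▸ qPoch_add y q m N
  have hx1 := hxN ▸ hx
  have hx2 := hxm ▸ hx
  have hy1 := hyN ▸ hy
  have hy2 := hym ▸ hy
  rw [div_mul_div_comm, div_eq_div_iff (mul_ne_zero (right_ne_zero_of_mul hy1)
    (left_ne_zero_of_mul hx2)) (mul_ne_zero (left_ne_zero_of_mul hx1) (right_ne_zero_of_mul hy2))]
  linear_combination (qPoch y q m * qPoch (y * q ^ m) q N) * (hxN.symm.trans hxm)
    + (qPoch x q m * qPoch (x * q ^ m) q N) * (hym.symm.trans hyN)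

lemma tsum_mul_tsum_pow_comm {𝕜 : Type*} [NormedField 𝕜] [CompleteSpace 𝕜] {g d x : ℕ → 𝕜}
    (hg : Summable fun m => ‖g m‖) (hd : Summable fun n => ‖d n‖) (hx : ∀ n, ‖x n‖ ≤ 1) :
    ∑' m, g m * ∑' n, d n * x n ^ m = ∑' n, d n * ∑' m, g m * x n ^ m := by
  have hsum : Summable (Function.uncurry fun m n => g m * (d n * x n ^ m)) := by
    refine .of_norm_bounded (hg.mul_of_nonneg hd (fun _ => norm_nonneg _) fun _ => norm_nonneg _)
      fun ⟨m, n⟩ => ?_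
    simp only [Function.uncurry_apply_pair, norm_mul, norm_pow]
    gcongr
    exact mul_le_of_le_one_right (norm_nonneg _) (pow_le_one₀ (norm_nonneg _) (hx n))
  simp only [← tsum_mul_left]
  rw [← hsum.tsum_comm]
  exact tsum_congr fun n => tsum_congr fun m => mul_left_comm _ _ _

theorem stmt0_general (N : ℕ) (q t a : ℂ) (hq0 : 0 < ‖q‖)
    (hq1 : ‖q‖ < 1) (ht : ‖t‖ < 1)
    (ha : ∀ k : ℕ, a * q ^ k ≠ 1)
    (g : ℕ → ℂ) (hg : Summable fun n => ‖g n‖) :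
    ∑' n : ℕ, g n *
        (qPoch (a * q ^ N) q n * qPoch t q n / (qPoch (t * q ^ N) q n * qPoch a q n)
          - qPoch t q N / qPoch a q N)
      = qPoch t q N / qPoch a q N *
        ∑' n : ℕ,
          (∑ k ∈ Finset.range (n + 2),
              gbinom q (n + 1) k * a ^ k * q ^ (N * k) * t ^ (n + 1 - k) *
                qPoch (q ^ (-(N : ℤ))) q k * qPoch (q ^ N) q (n + 1 - k)) *
            (∑' m : ℕ, g m * (q ^ (n + 1)) ^ m) / qPoch q q (n + 1) := by
  have hq : q ≠ 0 := norm_pos_iff.mp hq0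
  set C := qPoch t q N / qPoch a q N
  set d : ℕ → ℂ := fun n => qPochRatioCoeff q t a N (n + 1) / qPoch q q (n + 1)
  have hd : Summable fun n => ‖d n‖ :=
    (summable_nat_add_iff 1).mpr (summable_norm_qPochRatioCoeff hq hq1 ht a N)
  have hx : ∀ n, ‖q ^ (n + 1)‖ ≤ 1 :=
    fun n => norm_pow q (n + 1) ▸ pow_le_one₀ (norm_nonneg q) hq1.le
  have hbracket : ∀ m, qPoch (a * q ^ N) q m * qPoch t q m / (qPoch (t * q ^ N) q m * qPoch a q m)
      - C = C * ∑' n, d n * (q ^ (n + 1)) ^ m := fun m => by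
    have hsum := (hasSum_nat_add_iff' 1).mpr
      (hasSum_qPochRatioCoeff hq hq1 t a (z := q ^ m) (norm_mul_pow_lt_one ht hq1.le m) N)
    simp only [sum_range_one, qPochRatioCoeff_zero, pow_zero, qPoch_zero, div_one, mul_one] at hsum
    rw [qPoch_shift_ratio (qPoch_ne_zero ha _) (qPoch_ne_zero_of_norm_lt_one ht hq1.le _),
      ← mul_sub_one, ← hsum.tsum_eq]
    congr 1
    refine tsum_congr fun n => ?_
    rw [← pow_mul, ← pow_mul, mul_comm m, div_mul_eq_mul_div]
  calc _ = ∑' m, C * (g m * ∑' n, d n * (q ^ (n + 1)) ^ m) :=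
        tsum_congr fun m => by rw [hbracket]; ring
    _ = C * ∑' n, d n * ∑' m, g m * (q ^ (n + 1)) ^ m := by
        rw [tsum_mul_left, tsum_mul_tsum_pow_comm hg hd hx]
    _ = _ := congrArg (C * ·) (tsum_congr fun n => div_mul_eq_mul_div _ _ _)

theorem stmt0 (N : ℕ) (hN : 1 ≤ N) (q t a : ℂ) (hq0 : 0 < ‖q‖)
    (hq1 : ‖q‖ < 1) (ht : ‖t‖ < 1)
    (ha : ∀ k : ℕ, a * q ^ k ≠ 1)
    (g : ℕ → ℂ) (hg : Summable fun n => ‖g n‖) :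
    ∑' n : ℕ, g n *
        (qPoch (a * q ^ N) q n * qPoch t q n / (qPoch (t * q ^ N) q n * qPoch a q n)
          - qPoch t q N / qPoch a q N)
      = qPoch t q N / qPoch a q N *
        ∑' n : ℕ,
          (∑ k ∈ Finset.range (n + 2),
              gbinom q (n + 1) k * a ^ k * q ^ (N * k) * t ^ (n + 1 - k) *
                qPoch (q ^ (-(N : ℤ))) q k * qPoch (q ^ N) q (n + 1 - k)) *
            (∑' m : ℕ, g m * (q ^ (n + 1)) ^ m) / qPoch q q (n + 1) :=
  stmt0_general N q t a hq0 hq1 ht ha g hg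
end

section
/- Let q, t ∈ ℂ with |q| < 1, |tq| < 1 and t·q^{2k+1} ≠ 1 for every integer k ≥ 0. Then ∑_{n=0}^∞ q^{n²} / ∏_{k=0}^{n−1}(1 − t q^{2k+1}) = 1 + ∑_{n=1}^∞ q^n · ∏_{k=1}^{n−1}( t + q^{2k} ). -/
/-!
Write `Q = q²` and `z = tq`. Expanding `1 / (z; Q)_n = ∑_m h_m(1, Q, …, Q^(n-1)) z^m`, where
`h_m` is the complete homogeneous symmetric polynomial, turns the left side into the double series
`∑_{n,m} q^(n²) h_m(1, …, Q^(n-1)) z^m`, which converges absolutely because these coefficients are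
bounded uniformly in `n` and `m`. Its row `n = 0` is `1`. Summing the remaining terms along the
antidiagonals `(n - 1) + m = N` gives `q^(N+1) ∏_{k=1}^N (t + q^(2k))` by the `q`-binomial theorem,
which follows from the Pascal-type recursion
`h_(m+1)(1, …, Q^n) = Q^(m+1) h_(m+1)(1, …, Q^(n-1)) + h_m(1, …, Q^n)`.
-/

open Finset

/-- `completeHomGeom Q n m = h_m(1, Q, …, Q^(n-1))`, the coefficient of `z^m` in `1 / (z; Q)_n`. -/
noncomputable def completeHomGeom {R : Type*} [Semiring R] (Q : R) : ℕ → ℕ → R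
  | 0, 0 => 1
  | 0, _ + 1 => 0
  | _ + 1, 0 => 1
  | n + 1, m + 1 => Q ^ (m + 1) * completeHomGeom Q n (m + 1) + completeHomGeom Q (n + 1) m

namespace completeHomGeom

variable {R : Type*} [Semiring R] (Q : R)

@[simp] lemma zero_succ (m : ℕ) : completeHomGeom Q 0 (m + 1) = 0 := by rw [completeHomGeom]

@[simp] lemma zero_right (n : ℕ) : completeHomGeom Q n 0 = 1 := by
  cases n <;> rw [completeHomGeom]

lemma succ_succ (n m : ℕ) : completeHomGeom Q (n + 1) (m + 1) =
    Q ^ (m + 1) * completeHomGeom Q n (m + 1) + completeHomGeom Q (n + 1) m := by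
  rw [completeHomGeom]

@[simp] lemma one_left (m : ℕ) : completeHomGeom Q 1 m = 1 := by
  induction m with
  | zero => simp
  | succ m ih => simp [succ_succ, ih]

lemma succ_eq_sum (n m : ℕ) :
    completeHomGeom Q (n + 1) m = ∑ j ∈ range (m + 1), Q ^ j * completeHomGeom Q n j := by
  induction m with
  | zero => cases n <;> simp
  | succ m ih => rw [succ_succ, sum_range_succ, ih, add_comm]

end completeHomGeom

lemma Finset.Nat.sum_antidiagonal_succ_eq_add_mul {R : Type*} [CommSemiring R]
    {T : ℕ × ℕ → R} {x y : R} {N : ℕ}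
    (h_left : T (0, N + 1) = x * T (0, N)) (h_right : T (N + 1, 0) = y * T (N, 0))
    (h_succ : ∀ a b, a + b + 1 = N → T (a + 1, b + 1) = x * T (a + 1, b) + y * T (a, b + 1)) :
    ∑ p ∈ antidiagonal (N + 1), T p = (x + y) * ∑ p ∈ antidiagonal N, T p := by
  let below : ℕ × ℕ → R := fun | (a, b + 1) => T (a, b) | (_, 0) => 0
  let left : ℕ × ℕ → R := fun | (a + 1, b) => T (a, b) | (0, _) => 0
  have hsplit : ∀ p ∈ antidiagonal (N + 1), T p = x * below p + y * left p := by
    rintro ⟨_ | a, _ | b⟩ hp <;> simp only [HasAntidiagonal.mem_antidiagonal] at hp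
    · omega
    · obtain rfl : b = N := by omega
      simpa [below, left] using h_left
    · obtain rfl : a = N := by omega
      simpa [below, left] using h_right
    · exact h_succ a b (by omega)
  have hbelow : ∑ p ∈ antidiagonal (N + 1), below p = ∑ p ∈ antidiagonal N, T p := by
    simp [Nat.sum_antidiagonal_succ', below]
  have hleft : ∑ p ∈ antidiagonal (N + 1), left p = ∑ p ∈ antidiagonal N, T p := by
    simp [Nat.sum_antidiagonal_succ, left]
  rw [sum_congr rfl hsplit, sum_add_distrib, ← mul_sum, ← mul_sum, hbelow, hleft, add_mul]

lemma pow_succ_mul_prod_Icc_add_pow_eq_sum_antidiagonal {R : Type*} [CommSemiring R]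
    (q t : R) (N : ℕ) :
    q ^ (N + 1) * ∏ k ∈ Icc 1 N, (t + q ^ (2 * k)) =
      ∑ p ∈ antidiagonal N,
        q ^ ((p.1 + 1) ^ 2) * (completeHomGeom (q ^ 2) (p.1 + 1) p.2 * (t * q) ^ p.2) := by
  induction N with
  | zero => simp
  | succ N ih =>
    rw [Nat.sum_antidiagonal_succ_eq_add_mul (x := t * q) (y := q ^ (2 * N + 3)), ← ih,
      prod_Icc_succ_top (by omega)]
    · ring
    · simp only [zero_add, completeHomGeom.one_left]; ring
    · simp only [completeHomGeom.zero_right]; ring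
    · rintro a b rfl
      rw [completeHomGeom.succ_succ]
      ring

lemma Real.prod_range_inv_one_sub_pow_succ_le_exp {r : ℝ} (hr₀ : 0 ≤ r) (hr₁ : r < 1) (m : ℕ) :
    ∏ j ∈ range m, (1 - r ^ (j + 1))⁻¹ ≤ Real.exp (r / (1 - r) ^ 2) := by
  have hpos (j : ℕ) : 0 < 1 - r ^ (j + 1) := sub_pos.mpr (pow_lt_one₀ hr₀ hr₁ j.succ_ne_zero)
  have hfactor : ∀ j ∈ range m, (1 - r ^ (j + 1))⁻¹ ≤ Real.exp (r ^ (j + 1) / (1 - r)) := by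
    intro j _
    have hpow : r ^ (j + 1) ≤ r := pow_le_of_le_one hr₀ hr₁.le j.succ_ne_zero
    calc (1 - r ^ (j + 1))⁻¹ = r ^ (j + 1) / (1 - r ^ (j + 1)) + 1 := by
          rw [div_add_one (hpos j).ne', add_sub_cancel, one_div]
      _ ≤ Real.exp (r ^ (j + 1) / (1 - r ^ (j + 1))) := Real.add_one_le_exp _
      _ ≤ Real.exp (r ^ (j + 1) / (1 - r)) := by gcongr
  calc ∏ j ∈ range m, (1 - r ^ (j + 1))⁻¹
      ≤ ∏ j ∈ range m, Real.exp (r ^ (j + 1) / (1 - r)) :=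
        prod_le_prod (fun j _ => (inv_pos.mpr (hpos j)).le) hfactor
    _ = Real.exp ((∑ i ∈ Ico 1 (m + 1), r ^ i) / (1 - r)) := by
        rw [← Real.exp_sum, sum_div, sum_Ico_eq_sum_range, add_tsub_cancel_right]
        simp_rw [add_comm 1]
    _ ≤ Real.exp (r / (1 - r) ^ 2) := by
        rw [sq, ← div_div]
        gcongr
        simpa using geom_sum_Ico_le_of_lt_one (m := 1) (n := m + 1) hr₀ hr₁

section Analytic

variable {𝕜 : Type*} [NormedField 𝕜]

lemma norm_completeHomGeom_le_prod {Q : 𝕜} (hQ : ‖Q‖ < 1) (n m : ℕ) :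
    ‖completeHomGeom Q n m‖ ≤ ∏ j ∈ range m, (1 - ‖Q‖ ^ (j + 1))⁻¹ := by
  set B : ℕ → ℝ := fun m => ∏ j ∈ range m, (1 - ‖Q‖ ^ (j + 1))⁻¹
  have hB_nonneg (m : ℕ) : 0 ≤ B m := prod_nonneg fun j _ =>
    (inv_pos.mpr (sub_pos.mpr (pow_lt_one₀ (norm_nonneg Q) hQ j.succ_ne_zero))).le
  have hB_succ (m : ℕ) : ‖Q‖ ^ (m + 1) * B (m + 1) + B m = B (m + 1) := by
    have hne : 1 - ‖Q‖ ^ (m + 1) ≠ 0 :=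
      (sub_pos.mpr (pow_lt_one₀ (norm_nonneg Q) hQ m.succ_ne_zero)).ne'
    simp only [B, prod_range_succ]
    field_simp
    ring
  induction n generalizing m with
  | zero =>
    rcases m with _ | m
    · simp
    · rw [completeHomGeom.zero_succ, norm_zero]; exact hB_nonneg _
  | succ n ihn =>
    induction m with
    | zero => simp
    | succ m ihm =>
      calc ‖completeHomGeom Q (n + 1) (m + 1)‖
          ≤ ‖Q‖ ^ (m + 1) * ‖completeHomGeom Q n (m + 1)‖ + ‖completeHomGeom Q (n + 1) m‖ := by
            rw [completeHomGeom.succ_succ, ← norm_pow, ← norm_mul]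
            exact norm_add_le _ _
        _ ≤ ‖Q‖ ^ (m + 1) * B (m + 1) + B m := by gcongr; exact ihn (m + 1)
        _ = B (m + 1) := hB_succ m

lemma norm_completeHomGeom_le_exp {Q : 𝕜} (hQ : ‖Q‖ < 1) (n m : ℕ) :
    ‖completeHomGeom Q n m‖ ≤ Real.exp (‖Q‖ / (1 - ‖Q‖) ^ 2) :=
  (norm_completeHomGeom_le_prod hQ n m).trans
    (Real.prod_range_inv_one_sub_pow_succ_le_exp (norm_nonneg Q) hQ m)

lemma summable_norm_completeHomGeom_mul_pow {Q z : 𝕜} (hQ : ‖Q‖ < 1) (hz : ‖z‖ < 1) (n : ℕ) :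
    Summable fun m => ‖completeHomGeom Q n m * z ^ m‖ := by
  refine .of_nonneg_of_le (fun m => norm_nonneg _) (fun m => ?_)
    ((summable_geometric_of_lt_one (norm_nonneg z) hz).mul_left (Real.exp (‖Q‖ / (1 - ‖Q‖) ^ 2)))
  rw [norm_mul, norm_pow]
  gcongr
  exact norm_completeHomGeom_le_exp hQ n m

variable [CompleteSpace 𝕜]

lemma tsum_completeHomGeom_mul_pow {Q z : 𝕜} (hQ : ‖Q‖ < 1) (hz : ‖z‖ < 1) (n : ℕ) :
    ∑' m, completeHomGeom Q n m * z ^ m = (∏ k ∈ range n, (1 - z * Q ^ k))⁻¹ := by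
  induction n generalizing z with
  | zero =>
    rw [tsum_eq_single 0 fun m hm => by obtain ⟨m, rfl⟩ := Nat.exists_eq_succ_of_ne_zero hm; simp]
    simp
  | succ n ih =>
    have hzQ : ‖z * Q‖ < 1 := by
      rw [norm_mul]; exact mul_lt_one_of_nonneg_of_lt_one_left (norm_nonneg z) hz hQ.le
    have hgeom : Summable fun i => ‖z ^ i‖ := by
      simpa [norm_pow] using summable_geometric_of_lt_one (norm_nonneg z) hz
    have hprod : ∏ k ∈ range (n + 1), (1 - z * Q ^ k) =
        (∏ k ∈ range n, (1 - z * Q * Q ^ k)) * (1 - z) := by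
      rw [prod_range_succ', pow_zero, mul_one]
      simp_rw [pow_succ', mul_assoc]
    rw [hprod, mul_inv, ← ih hzQ, ← tsum_geometric_of_norm_lt_one hz,
      tsum_mul_tsum_eq_tsum_sum_range_of_summable_norm
        (summable_norm_completeHomGeom_mul_pow hQ hzQ n) hgeom]
    refine tsum_congr fun m => ?_
    rw [completeHomGeom.succ_eq_sum, sum_mul]
    refine sum_congr rfl fun j hj => ?_
    obtain ⟨i, rfl⟩ := Nat.exists_eq_add_of_le (Nat.le_of_lt_succ (mem_range.mp hj))
    rw [add_tsub_cancel_left]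
    ring

lemma summable_mul_completeHomGeom_mul_pow {a : ℕ → 𝕜} (ha : Summable fun n => ‖a n‖)
    {Q z : 𝕜} (hQ : ‖Q‖ < 1) (hz : ‖z‖ < 1) :
    Summable fun p : ℕ × ℕ => a p.1 * (completeHomGeom Q p.1 p.2 * z ^ p.2) := by
  set C := Real.exp (‖Q‖ / (1 - ‖Q‖) ^ 2)
  have hgeom : Summable fun m => C * ‖z‖ ^ m :=
    (summable_geometric_of_lt_one (norm_nonneg z) hz).mul_left C
  refine Summable.of_norm (.of_nonneg_of_le (fun p => norm_nonneg _) (fun p => ?_)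
    (ha.mul_of_nonneg hgeom (fun n => norm_nonneg _) (fun m => by positivity)))
  rw [norm_mul, norm_mul, norm_pow]
  gcongr
  exact norm_completeHomGeom_le_exp hQ _ _

end Analytic

lemma tsum_sum_antidiagonal_eq_tsum {E : Type*} [AddCommMonoid E] [TopologicalSpace E]
    [ContinuousAdd E] [T3Space E] {g : ℕ × ℕ → E} (hg : Summable g) :
    ∑' n, ∑ p ∈ antidiagonal n, g p = ∑' p, g p := by
  let e := HasAntidiagonal.sigmaAntidiagonalEquivProd (A := ℕ)
  rw [← e.tsum_eq g, Summable.tsum_sigma' (f := fun x => g (e x)) (fun n => .of_finite)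
    (e.summable_iff.mpr hg)]
  exact tsum_congr fun n => (Finset.tsum_subtype (antidiagonal n) g).symm

lemma tsum_prod_eq_tsum_zero_add_tsum_sum_antidiagonal {E : Type*} [NormedAddCommGroup E]
    [CompleteSpace E] {f : ℕ × ℕ → E} (hf : Summable f) :
    ∑' p, f p = ∑' m, f (0, m) + ∑' n, ∑ p ∈ antidiagonal n, f (p.1 + 1, p.2) := by
  have hshift : Summable fun p : ℕ × ℕ => f (p.1 + 1, p.2) :=
    hf.comp_injective (Nat.succ_injective.prodMap Function.injective_id)
  rw [hf.tsum_prod, hf.prod.tsum_eq_zero_add, tsum_sum_antidiagonal_eq_tsum hshift,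
    hshift.tsum_prod]

theorem stmt8_general (q t : ℂ) (hq : ‖q‖ < 1) (htq : ‖t * q‖ < 1) :
    ∑' n : ℕ, q ^ (n ^ 2) / ∏ k ∈ Finset.range n, (1 - t * q ^ (2 * k + 1))
      = 1 + ∑' n : ℕ, q ^ (n + 1) * ∏ k ∈ Finset.Icc 1 n, (t + q ^ (2 * k)) := by
  have hQ : ‖q ^ 2‖ < 1 := by rw [norm_pow]; exact pow_lt_one₀ (norm_nonneg q) hq two_ne_zero
  have hsq : Summable fun n : ℕ => ‖q ^ (n ^ 2)‖ := by
    refine .of_nonneg_of_le (fun n => norm_nonneg _) (fun n => ?_)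
      (summable_geometric_of_lt_one (norm_nonneg q) hq)
    rw [norm_pow]
    exact pow_le_pow_of_le_one (norm_nonneg q) hq.le (Nat.le_self_pow two_ne_zero n)
  set f : ℕ × ℕ → ℂ := fun p => q ^ (p.1 ^ 2) * (completeHomGeom (q ^ 2) p.1 p.2 * (t * q) ^ p.2)
  have hf : Summable f := summable_mul_completeHomGeom_mul_pow hsq hQ htq
  have hrow (n : ℕ) :
      q ^ (n ^ 2) / ∏ k ∈ range n, (1 - t * q ^ (2 * k + 1)) = ∑' m, f (n, m) := by
    have hprod : ∏ k ∈ range n, (1 - t * q ^ (2 * k + 1)) =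
        ∏ k ∈ range n, (1 - t * q * (q ^ 2) ^ k) :=
      prod_congr rfl fun k _ => by ring
    rw [hprod, div_eq_mul_inv, ← tsum_completeHomGeom_mul_pow hQ htq, ← tsum_mul_left]
  have hrow_zero : ∑' m, f (0, m) = 1 := by simpa using (hrow 0).symm
  rw [tsum_congr hrow, ← hf.tsum_prod, tsum_prod_eq_tsum_zero_add_tsum_sum_antidiagonal hf,
    hrow_zero]
  exact congrArg _ <| tsum_congr fun N =>
    (pow_succ_mul_prod_Icc_add_pow_eq_sum_antidiagonal q t N).symm

theorem stmt8 (q t : ℂ) (hq : ‖q‖ < 1) (htq : ‖t * q‖ < 1)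
    (ht : ∀ k : ℕ, t * q ^ (2 * k + 1) ≠ 1) :
    ∑' n : ℕ, q ^ (n ^ 2) / ∏ k ∈ Finset.range n, (1 - t * q ^ (2 * k + 1))
      = 1 + ∑' n : ℕ, q ^ (n + 1) * ∏ k ∈ Finset.Icc 1 n, (t + q ^ (2 * k)) :=
  stmt8_general q t hq htq
end

section
/- Let N be a positive integer and let q, t, c ∈ ℂ be arbitrary. Then ∑_{n=0}^{N−1} c^n · [ (t;q)_n − (t;q)_N ] = t · ∑_{n=1}^{N} ( ∑_{j=0}^{n−1} c^j ) · (t;q)_{n−1} · q^{n−1}. In particular, when c ≠ 1 the right-hand side equals (t/(1−c)) · ∑_{n=1}^{N} (1 − c^n) · (t;q)_{n−1} · q^{n−1}. -/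
/-
Abel summation: ∑ₙ cⁿ((t;q)ₙ − (t;q)_N) = ∑ₘ (∑_{j≤m} cʲ)((t;q)ₘ − (t;q)ₘ₊₁), and
(t;q)ₘ − (t;q)ₘ₊₁ = t qᵐ (t;q)ₘ. For c ≠ 1 the partial geometric sums are (1 − cᵐ⁺¹)/(1 − c).
-/

open Finset

lemma qPoch_sub_qPoch_succ (t q : ℂ) (n : ℕ) :
    qPoch t q n - qPoch t q (n + 1) = t * (qPoch t q n * q ^ n) := by
  rw [qPoch, qPoch, prod_range_succ]
  ring

lemma sum_range_mul_sub_eq_sum_range_partialSum_mul {R : Type*} [CommRing R] (a b : ℕ → R)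
    (N : ℕ) :
    ∑ n ∈ range N, a n * (b n - b N)
      = ∑ m ∈ range N, (∑ j ∈ range (m + 1), a j) * (b m - b (m + 1)) := by
  induction N with
  | zero => simp
  | succ N ih =>
    have hsplit : ∀ n, a n * (b n - b (N + 1)) = a n * (b n - b N) + a n * (b N - b (N + 1)) :=
      fun n => by ring
    rw [sum_range_succ, sum_congr rfl fun n _ => hsplit n, sum_add_distrib, ih, ← sum_mul,
      sum_range_succ _ N, sum_range_succ (fun j => a j) N]
    ring

theorem stmt13_general (N : ℕ) (q t c : ℂ) :
    (∑ n ∈ Finset.range N, c ^ n * (qPoch t q n - qPoch t q N)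
        = t * ∑ n ∈ Finset.range N,
            (∑ j ∈ Finset.range (n + 1), c ^ j) * qPoch t q n * q ^ n)
    ∧ (c ≠ 1 →
        ∑ n ∈ Finset.range N, c ^ n * (qPoch t q n - qPoch t q N)
          = t / (1 - c) * ∑ n ∈ Finset.range N,
              (1 - c ^ (n + 1)) * qPoch t q n * q ^ n) := by
  have hpartial : ∑ n ∈ range N, c ^ n * (qPoch t q n - qPoch t q N)
      = t * ∑ n ∈ range N, (∑ j ∈ range (n + 1), c ^ j) * qPoch t q n * q ^ n := by
    rw [sum_range_mul_sub_eq_sum_range_partialSum_mul, mul_sum]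
    refine sum_congr rfl fun n _ => ?_
    rw [qPoch_sub_qPoch_succ]
    ring
  refine ⟨hpartial, fun hc => ?_⟩
  have hc' : (1 : ℂ) - c ≠ 0 := sub_ne_zero.mpr hc.symm
  rw [hpartial, mul_sum, mul_sum]
  refine sum_congr rfl fun n _ => ?_
  rw [← geom_sum_mul_neg]
  field_simp

theorem stmt13 (N : ℕ) (hN : 1 ≤ N) (q t c : ℂ) :
    (∑ n ∈ Finset.range N, c ^ n * (qPoch t q n - qPoch t q N)
        = t * ∑ n ∈ Finset.range N,
            (∑ j ∈ Finset.range (n + 1), c ^ j) * qPoch t q n * q ^ n)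
    ∧ (c ≠ 1 →
        ∑ n ∈ Finset.range N, c ^ n * (qPoch t q n - qPoch t q N)
          = t / (1 - c) * ∑ n ∈ Finset.range N,
              (1 - c ^ (n + 1)) * qPoch t q n * q ^ n) :=
  stmt13_general N q t c
end
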